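/- Let ψ and φ be permutation-symmetric states of n ≥ 3 qudits and suppose there exist unitary d×d matrices U_1,…,U_n with (U_1 ⊗ ⋯ ⊗ U_n) ψ = φ. Then there exists a single unitary d×d matrix U with U^{⊗n} ψ = φ. -/

import Mathlib

open Matrix BigOperators Polynomial

/-- Permutation symmetry of an `n`-qudit state represented by its amplitudes. -/
def PSym {n d : ℕ} (ψ : (Fin n → Fin d) → ℂ) : Prop :=
  ∀ σ : Equiv.Perm (Fin n), ∀ x : Fin n → Fin d, ψ (x ∘ σ) = ψ x

/-- The operator `B` acting on the `k`-th tensor factor (identity elsewhere). -/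
noncomputable def appAt {n d : ℕ} (k : Fin n) (B : Matrix (Fin d) (Fin d) ℂ)
    (ψ : (Fin n → Fin d) → ℂ) : (Fin n → Fin d) → ℂ :=
  fun x => ∑ j : Fin d, B (x k) j * ψ (Function.update x k j)

/-- The operator `A 1 ⊗ A 2 ⊗ ⋯ ⊗ A n` acting on an `n`-qudit state. -/
noncomputable def appAll {n d : ℕ} (A : Fin n → Matrix (Fin d) (Fin d) ℂ)
    (ψ : (Fin n → Fin d) → ℂ) : (Fin n → Fin d) → ℂ :=
  fun x => ∑ y : Fin n → Fin d, (∏ k, A k (x k) (y k)) * ψ y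

/-!
Write `X_k` for the matrix `X` acting on slot `k` alone. Symmetry of `ψ` and of `φ = (⨂ U_k) ψ`
under the transposition of slots `a ≠ b` gives `(U_a⋆ U_b)_a ψ = (U_a⋆ U_b)_b ψ`. Call `X`
slot-independent (on `ψ`) when `X_k ψ` does not depend on `k`. For `n ≥ 3` these matrices form a
subalgebra, and for slot-independent `A_k` the operator `⨂ A_k` acts on `ψ` as the single product
`(A_n ⋯ A_1)_1`. With `V_k = U_1⋆ U_k` this gives `φ = U_1^{⊗n} M_1 ψ` for the unitary
`M = V_n ⋯ V_1`. A unitary `n`-th root `W` of `M` that is a polynomial in `M` is slot-independent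
as well, so `W^{⊗n} ψ = (W^n)_1 ψ = M_1 ψ`, and `U_1 W` is the required unitary.
-/

section UnitaryRoot

open scoped Matrix.Norms.L2Operator

theorem Matrix.exists_aeval_mem_unitaryGroup_pow_eq {ι : Type*} [Fintype ι] [DecidableEq ι]
    {M : Matrix ι ι ℂ} (hM : M ∈ unitaryGroup ι ℂ) {m : ℕ} (hm : m ≠ 0) :
    ∃ p : ℂ[X], aeval M p ∈ unitaryGroup ι ℂ ∧ aeval M p ^ m = M := by
  have : IsStarNormal M := isStarNormal_of_mem_unitary hM
  -- `aeval M p = cfc root M`, since `p` interpolates `root` on the finite spectrum of `M`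
  let root : ℂ → ℂ := fun z => z ^ (m⁻¹ : ℂ)
  have root_pow (z : ℂ) : root z ^ m = z := Complex.cpow_nat_inv_pow z hm
  let p : ℂ[X] := Lagrange.interpolate M.finite_spectrum.toFinset id root
  have hp : ∀ z ∈ spectrum ℂ M, p.eval z = root z := fun z hz =>
    Lagrange.eval_interpolate_at_node root (Set.injOn_id _) (M.finite_spectrum.mem_toFinset.mpr hz)
  refine ⟨p, mem_unitaryGroup_iff'.mpr ?_, ?_⟩
  · rw [← cfc_polynomial p M, ← cfc_star, ← cfc_mul _ _ M, ← cfc_one ℂ M]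
    refine cfc_congr fun z hz => ?_
    have hz1 : ‖z‖ = 1 := by simpa using spectrum.subset_circle_of_unitary hM hz
    have hroot : ‖root z‖ = 1 :=
      (pow_eq_one_iff_of_nonneg (norm_nonneg _) hm).mp (by rw [← norm_pow, root_pow, hz1])
    simp [hp z hz, Complex.conj_mul', hroot]
  · rw [← cfc_polynomial p M, ← cfc_pow _ m M]
    conv_rhs => rw [← cfc_id ℂ M]
    exact cfc_congr fun z hz => by simp [hp z hz, root_pow]

end UnitaryRoot

section Qudits

variable {n d : ℕ}

theorem appAll_mul (A B : Fin n → Matrix (Fin d) (Fin d) ℂ) (ψ : (Fin n → Fin d) → ℂ) :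
    appAll A (appAll B ψ) = appAll (A * B) ψ := by
  funext x
  simp only [appAll, Finset.mul_sum]
  rw [Finset.sum_comm]
  refine Finset.sum_congr rfl fun z _ => ?_
  simp_rw [← mul_assoc, ← Finset.sum_mul, ← Finset.prod_mul_distrib]
  congr 1
  rw [← Fintype.prod_sum fun k j => A k (x k) j * B k j (z k)]
  exact Finset.prod_congr rfl fun k _ => (mul_apply).symm

theorem appAll_one (ψ : (Fin n → Fin d) → ℂ) : appAll 1 ψ = ψ := by
  funext x
  simp [appAll, one_apply, Finset.prod_boole, ← funext_iff]

theorem appAll_mulSingle (i : Fin n) (X : Matrix (Fin d) (Fin d) ℂ) (ψ : (Fin n → Fin d) → ℂ) :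
    appAll (Pi.mulSingle i X) ψ = appAt i X ψ := by
  funext x
  refine (Fintype.sum_of_injective (Function.update x i) (Function.update_injective x i) _ _
    ?_ fun j => ?_).symm
  · intro y hy
    obtain ⟨k, hki, hk⟩ : ∃ k ≠ i, y k ≠ x k := by
      by_contra! hy'
      exact hy ⟨y i, funext fun k => by
        by_cases hki : k = i <;> simp [hki, hy' k]⟩
    rw [Finset.prod_eq_zero (Finset.mem_univ k) (by simp [hki, one_apply, Ne.symm hk]), zero_mul]
  · rw [Fintype.prod_eq_single i fun k hk => by simp [hk, one_apply]]
    simp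

theorem appAt_appAt_self (i : Fin n) (X Y : Matrix (Fin d) (Fin d) ℂ)
    (ψ : (Fin n → Fin d) → ℂ) : appAt i X (appAt i Y ψ) = appAt i (X * Y) ψ := by
  simp only [← appAll_mulSingle, appAll_mul, Pi.mulSingle_mul]

theorem appAt_comm {i j : Fin n} (hij : i ≠ j) (X Y : Matrix (Fin d) (Fin d) ℂ)
    (ψ : (Fin n → Fin d) → ℂ) : appAt i X (appAt j Y ψ) = appAt j Y (appAt i X ψ) := by
  simp only [← appAll_mulSingle, appAll_mul,
    (Pi.mulSingle_commute (f := fun _ => Matrix (Fin d) (Fin d) ℂ) hij X Y).eq]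

theorem appAt_one (i : Fin n) (ψ : (Fin n → Fin d) → ℂ) :
    appAt i (1 : Matrix (Fin d) (Fin d) ℂ) ψ = ψ := by
  rw [← appAll_mulSingle, Pi.mulSingle_one, appAll_one]

theorem appAt_add (i : Fin n) (X Y : Matrix (Fin d) (Fin d) ℂ) (ψ : (Fin n → Fin d) → ℂ) :
    appAt i (X + Y) ψ = appAt i X ψ + appAt i Y ψ := by
  funext x
  simp [appAt, add_mul, Finset.sum_add_distrib]

theorem appAt_smul (i : Fin n) (c : ℂ) (X : Matrix (Fin d) (Fin d) ℂ) (ψ : (Fin n → Fin d) → ℂ) :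
    appAt i (c • X) ψ = c • appAt i X ψ := by
  funext x
  simp [appAt, Finset.mul_sum, mul_assoc]

theorem appAt_comp_perm {ψ : (Fin n → Fin d) → ℂ} (hψ : PSym ψ) (σ : Equiv.Perm (Fin n))
    (i : Fin n) (X : Matrix (Fin d) (Fin d) ℂ) (x : Fin n → Fin d) :
    appAt i X ψ (x ∘ σ) = appAt (σ i) X ψ x := by
  refine Finset.sum_congr rfl fun j _ => ?_
  rw [← Function.update_comp_eq_of_injective _ σ.injective, hψ, Function.comp_apply]

theorem appAll_comp_perm {ψ : (Fin n → Fin d) → ℂ} (hψ : PSym ψ)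
    (A : Fin n → Matrix (Fin d) (Fin d) ℂ) (σ : Equiv.Perm (Fin n)) (x : Fin n → Fin d) :
    appAll (fun k => A (σ k)) ψ (x ∘ σ) = appAll A ψ x := by
  rw [appAll, ← Equiv.sum_comp (Equiv.arrowCongr σ.symm (Equiv.refl (Fin d)))]
  refine Finset.sum_congr rfl fun z _ => ?_
  have hz : Equiv.arrowCongr σ.symm (Equiv.refl (Fin d)) z = z ∘ σ := rfl
  simp only [hz, Function.comp_apply, Equiv.prod_comp σ fun k => A k (x k) (z k), hψ σ z]

theorem appAll_comp_perm_of_psym {ψ : (Fin n → Fin d) → ℂ} (hψ : PSym ψ)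
    {A : Fin n → Matrix (Fin d) (Fin d) ℂ} (hAψ : PSym (appAll A ψ)) (σ : Equiv.Perm (Fin n)) :
    appAll (fun k => A (σ k)) ψ = appAll A ψ := by
  funext x
  have hx : (x ∘ σ.symm) ∘ σ = x := by ext; simp
  rw [← hx, appAll_comp_perm hψ, hx, ← Equiv.Perm.inv_def, hAψ]

theorem appAt_eq_of_appAt_eq {ψ : (Fin n → Fin d) → ℂ} (hψ : PSym ψ)
    {X : Matrix (Fin d) (Fin d) ℂ} {a b : Fin n} (hab : a ≠ b) (h : appAt a X ψ = appAt b X ψ)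
    (i : Fin n) : appAt i X ψ = appAt b X ψ := by
  by_cases hib : i = b
  · rw [hib]
  funext x
  have := congrFun h (x ∘ Equiv.swap a i)
  rwa [appAt_comp_perm hψ, appAt_comp_perm hψ, Equiv.swap_apply_left,
    Equiv.swap_apply_of_ne_of_ne (Ne.symm hab) (Ne.symm hib)] at this

theorem appAt_star_mul_eq {ψ : (Fin n → Fin d) → ℂ} (hψ : PSym ψ)
    {U : Fin n → Matrix (Fin d) (Fin d) ℂ} (hU : ∀ k, U k ∈ unitaryGroup (Fin d) ℂ)
    (hUψ : PSym (appAll U ψ)) {a b : Fin n} (hab : a ≠ b) :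
    appAt a (star (U a) * U b) ψ = appAt b (star (U a) * U b) ψ := by
  set X := star (U a) * U b
  set Y := star (U b) * U a
  have hXY : X * Y = 1 := by
    simp [X, Y, mul_assoc, ← mul_assoc (U b), Unitary.mul_star_self_of_mem (hU b),
      Unitary.star_mul_self_of_mem (hU a)]
  have hfamily :
      star U * (fun k => U (Equiv.swap a b k)) = Pi.mulSingle a X * Pi.mulSingle b Y := by
    funext k
    by_cases hka : k = a
    · subst hka; simp [X, hab]
    by_cases hkb : k = b
    · subst hkb; simp [Y, hab.symm]
    simp [hka, hkb, Equiv.swap_apply_of_ne_of_ne, Unitary.star_mul_self_of_mem (hU k)]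
  -- `ψ = (⨂ U_k)⋆ (⨂ U_{swap a b k}) ψ`, and the product family is `X` in slot `a`, `Y` in slot `b`
  have hψ_eq : appAt a X (appAt b Y ψ) = ψ := by
    rw [← appAll_mulSingle, ← appAll_mulSingle, appAll_mul, ← hfamily, ← appAll_mul,
      appAll_comp_perm_of_psym hψ hUψ, appAll_mul]
    convert appAll_one ψ
    funext k
    exact Unitary.star_mul_self_of_mem (hU k)
  calc appAt a X ψ = appAt a X (appAt b (X * Y) ψ) := by rw [hXY, appAt_one]
    _ = appAt b X (appAt a X (appAt b Y ψ)) := by rw [← appAt_appAt_self b X Y, appAt_comm hab]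
    _ = appAt b X ψ := by rw [hψ_eq]

variable (ψ : (Fin n → Fin d) → ℂ) (hn : 3 ≤ n)

def slotIndependent : Subalgebra ℂ (Matrix (Fin d) (Fin d) ℂ) where
  carrier := {X | ∀ i j : Fin n, appAt i X ψ = appAt j X ψ}
  mul_mem' {X Y} hX hY i j := by
    by_cases hij : i = j
    · rw [hij]
    -- a third slot `c` lets `X` (in slot `i` or `j`) and `Y` (in slot `c`) commute
    obtain ⟨c, hci, hcj⟩ := Fin.exists_ne_and_ne_of_two_lt i j hn
    calc appAt i (X * Y) ψ = appAt i X (appAt c Y ψ) := by rw [← appAt_appAt_self, hY i c]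
      _ = appAt c Y (appAt j X ψ) := by rw [appAt_comm hci.symm, hX i j]
      _ = appAt j (X * Y) ψ := by rw [← appAt_comm hcj.symm, hY c j, appAt_appAt_self]
  add_mem' hX hY i j := by rw [appAt_add, appAt_add, hX i j, hY i j]
  algebraMap_mem' c i j := by
    rw [Algebra.algebraMap_eq_smul_one, appAt_smul, appAt_smul, appAt_one, appAt_one]

variable {ψ hn}

theorem star_mul_mem_slotIndependent (hψ : PSym ψ) {U : Fin n → Matrix (Fin d) (Fin d) ℂ}
    (hU : ∀ k, U k ∈ unitaryGroup (Fin d) ℂ) (hUψ : PSym (appAll U ψ)) (a b : Fin n) :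
    star (U a) * U b ∈ slotIndependent ψ hn := by
  rcases eq_or_ne a b with rfl | hab
  · rw [Unitary.star_mul_self_of_mem (hU a)]
    exact one_mem _
  · have h := appAt_eq_of_appAt_eq hψ hab (appAt_star_mul_eq hψ hU hUψ hab)
    exact fun i j => (h i).trans (h j).symm

theorem appAll_ite_mem_eq_appAt_prod {A : Fin n → Matrix (Fin d) (Fin d) ℂ}
    (hA : ∀ k, A k ∈ slotIndependent ψ hn) {l : List (Fin n)} (hl : l.Nodup) (i : Fin n) :
    appAll (fun k => if k ∈ l then A k else 1) ψ = appAt i (l.map A).reverse.prod ψ := by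
  induction l generalizing i with
  | nil =>
    simp only [List.not_mem_nil, if_false, List.map_nil, List.reverse_nil, List.prod_nil, appAt_one]
    exact appAll_one ψ
  | cons a t ih =>
    obtain ⟨hat, ht⟩ := List.nodup_cons.mp hl
    obtain ⟨c, hca, -⟩ := Fin.exists_ne_and_ne_of_two_lt a a hn
    have hfamily : (fun k => if k ∈ a :: t then A k else 1)
        = Pi.mulSingle a (A a) * fun k => if k ∈ t then A k else 1 := by
      funext k
      by_cases hka : k = a
      · subst hka; simp [hat]
      · simp [hka]
    have hP : (t.map A).reverse.prod ∈ slotIndependent ψ hn :=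
      Subalgebra.list_prod_mem _ (by simpa using fun k _ => hA k)
    calc appAll (fun k => if k ∈ a :: t then A k else 1) ψ
        = appAt a (A a) (appAt c (t.map A).reverse.prod ψ) := by
          rw [hfamily, ← appAll_mul, ih ht c, appAll_mulSingle]
      _ = appAt c ((t.map A).reverse.prod * A a) ψ := by
          rw [← appAt_comm hca, hA a a c, appAt_appAt_self]
      _ = appAt i ((a :: t).map A).reverse.prod ψ := by
          rw [mul_mem hP (hA a) c i]
          simp

theorem appAll_eq_appAt_prod {A : Fin n → Matrix (Fin d) (Fin d) ℂ}
    (hA : ∀ k, A k ∈ slotIndependent ψ hn) (i : Fin n) :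
    appAll A ψ = appAt i (List.ofFn A).reverse.prod ψ := by
  simpa [List.ofFn_eq_map] using appAll_ite_mem_eq_appAt_prod hA (List.nodup_finRange n) i

end Qudits

theorem stmt_9 {n d : ℕ} (hn : 3 ≤ n) (ψ φ : (Fin n → Fin d) → ℂ)
    (hψ : PSym ψ) (hφ : PSym φ)
    (U : Fin n → Matrix (Fin d) (Fin d) ℂ)
    (hU : ∀ i, U i ∈ Matrix.unitaryGroup (Fin d) ℂ)
    (h : appAll U ψ = φ) :
    ∃ V : Matrix (Fin d) (Fin d) ℂ, V ∈ Matrix.unitaryGroup (Fin d) ℂ ∧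
      appAll (fun _ => V) ψ = φ := by
  let a : Fin n := ⟨0, by omega⟩
  let V : Fin n → Matrix (Fin d) (Fin d) ℂ := fun k => star (U a) * U k
  have hV : ∀ k, V k ∈ slotIndependent ψ hn :=
    star_mul_mem_slotIndependent hψ hU (h ▸ hφ) a
  let M := (List.ofFn V).reverse.prod
  have hM : M ∈ unitaryGroup (Fin d) ℂ :=
    list_prod_mem (by simpa [V] using fun k => mul_mem (Unitary.star_mem (hU a)) (hU k))
  obtain ⟨p, hW, hWM⟩ := exists_aeval_mem_unitaryGroup_pow_eq hM (by omega : n ≠ 0)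
  have hWψ : aeval M p ∈ slotIndependent ψ hn :=
    Algebra.adjoin_singleton_le (Subalgebra.list_prod_mem _ (by simpa using hV))
      (aeval_mem_adjoin_singleton ℂ M)
  refine ⟨U a * aeval M p, mul_mem (hU a) hW, ?_⟩
  calc appAll (fun _ => U a * aeval M p) ψ
      = appAll (fun _ => U a) (appAll (fun _ => aeval M p) ψ) := (appAll_mul _ _ ψ).symm
    _ = appAll (fun _ => U a) (appAll V ψ) := by
        rw [appAll_eq_appAt_prod (fun _ => hWψ) a, appAll_eq_appAt_prod hV a]
        simp [List.prod_replicate, hWM, M]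
    _ = φ := by
        rw [appAll_mul, ← h]
        congr with k : 1
        simp [V, ← mul_assoc, Unitary.mul_star_self_of_mem (hU a)]
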